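/- Let A ∈ ℝ^{m×n} be a matrix of rank one, let X₁, X₂ be independent standard Gaussian vectors in ℝⁿ, and let θ ≥ 1. Then P(T^cb(θ,X) ≥ ‖A‖) = 1, i.e., the Counterbalance estimator almost surely does not underestimate the spectral norm of a rank-one matrix. -/

import Mathlib

/-!
The range of a rank-one `A` is the line through `u = A x₁` whenever `A x₁ ≠ 0`, so `A y = c u`
and `‖A y‖ ‖u‖ = |⟪Aᵀ u, y⟫| ≤ ‖Aᵀ u‖ ‖y‖`. Hence `‖A‖ ≤ ‖AᵀA x₁‖ / ‖A x₁‖`, and the estimator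
dominates this ratio once `θ ≥ 1`. Finally `A X₁ ≠ 0` almost surely: the kernel of `A` is a
proper subspace, hence Lebesgue-null, and the Gaussian law is absolutely continuous.
-/

open MeasureTheory ProbabilityTheory Real Matrix

/-- Spectral norm (ℓ²→ℓ² operator norm) of a real matrix. -/
noncomputable def matSpectralNorm {m n : ℕ} (A : Matrix (Fin m) (Fin n) ℝ) : ℝ :=
  ‖LinearMap.toContinuousLinearMap (Matrix.toEuclideanLin A)‖

/-- Frobenius norm of a real matrix. -/
noncomputable def frobeniusNorm {m n : ℕ} (A : Matrix (Fin m) (Fin n) ℝ) : ℝ :=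
  Real.sqrt (∑ i, ∑ j, (A i j) ^ 2)

/-- Effective rank `ρ = ‖A‖_F² / ‖A‖²`. -/
noncomputable def effectiveRank {m n : ℕ} (A : Matrix (Fin m) (Fin n) ℝ) : ℝ :=
  frobeniusNorm A ^ 2 / matSpectralNorm A ^ 2

/-- The standard Gaussian measure on `EuclideanSpace ℝ (Fin n)`: the law of a random
vector with i.i.d. `N(0,1)` coordinates. -/
noncomputable def stdGaussian (n : ℕ) : Measure (EuclideanSpace ℝ (Fin n)) :=
  (Measure.pi fun _ : Fin n => gaussianReal 0 1).map
    (MeasurableEquiv.toLp 2 (Fin n → ℝ))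

/-- CDF of the chi-squared distribution with one degree of freedom:
`χ₁²(t) = P(ξ² ≤ t)` for `ξ ~ N(0,1)`. -/
noncomputable def chiSq1CDF (t : ℝ) : ℝ :=
  ((gaussianReal 0 1) {x : ℝ | x ^ 2 ≤ t}).toReal

/-- Density of the chi-squared distribution with one degree of freedom:
`p₁(u) = e^{-u/2} / √(2 π u)`. -/
noncomputable def chiSq1PDF (u : ℝ) : ℝ :=
  Real.exp (-u / 2) / Real.sqrt (2 * Real.pi * u)

/-- Density `p_{(1,α)}` of `ξ² + α η²` for `ξ, η` i.i.d. `N(0,1)`: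
`p_{(1,α)}(t) = ∫₀^t p₁(s) (1/α) p₁((t-s)/α) ds`. -/
noncomputable def weightedChiSqPDF (α : ℝ) (t : ℝ) : ℝ :=
  ∫ s in (0:ℝ)..t, chiSq1PDF s * ((1 / α) * chiSq1PDF ((t - s) / α))

/-- The Counterbalance estimator
`T^cb(θ, (x₁, x₂)) = θ √((‖AᵀAx₁‖/‖Ax₁‖)² + ‖Ax₂‖²)`. -/
noncomputable def counterbalance {m n : ℕ} (A : Matrix (Fin m) (Fin n) ℝ) (θ : ℝ)
    (x₁ x₂ : EuclideanSpace ℝ (Fin n)) : ℝ :=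
  θ * Real.sqrt ((‖Matrix.toEuclideanLin Aᵀ (Matrix.toEuclideanLin A x₁)‖ /
      ‖Matrix.toEuclideanLin A x₁‖) ^ 2 + ‖Matrix.toEuclideanLin A x₂‖ ^ 2)

namespace MeasureTheory.Measure

theorem pi_absolutelyContinuous_pi {n : ℕ} {α : Fin n → Type*} [∀ i, MeasurableSpace (α i)]
    {μ ν : ∀ i, Measure (α i)} [∀ i, SigmaFinite (μ i)] [∀ i, SigmaFinite (ν i)]
    (h : ∀ i, μ i ≪ ν i) : Measure.pi μ ≪ Measure.pi ν := by
  induction n with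
  | zero => rw [pi_of_empty μ, pi_of_empty ν]
  | succ n ih =>
    have hμ := (measurePreserving_piFinSuccAbove μ 0).symm
    have hν := (measurePreserving_piFinSuccAbove ν 0).symm
    rw [← hμ.map_eq, ← hν.map_eq]
    exact ((h 0).prod (ih fun i ↦ h _)).map (MeasurableEquiv.measurable _)

end MeasureTheory.Measure

-- `_root_` because `ProbabilityTheory.stdGaussian` is in scope as well.
theorem stdGaussian_absolutelyContinuous_volume (n : ℕ) :
    _root_.stdGaussian n ≪ (volume : Measure (EuclideanSpace ℝ (Fin n))) := by
  rw [← (EuclideanSpace.volume_preserving_symm_measurableEquiv_toLp (Fin n)).symm.map_eq]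
  exact (Measure.pi_absolutelyContinuous_pi fun _ ↦
    gaussianReal_absolutelyContinuous 0 one_ne_zero).map (MeasurableEquiv.measurable _)

instance (n : ℕ) : IsProbabilityMeasure (_root_.stdGaussian n) :=
  Measure.isProbabilityMeasure_map (MeasurableEquiv.measurable _).aemeasurable

theorem ae_stdGaussian_apply_ne_zero {n : ℕ} {F : Type*} [AddCommGroup F] [Module ℝ F]
    {T : EuclideanSpace ℝ (Fin n) →ₗ[ℝ] F} (hT : T ≠ 0) :
    ∀ᵐ x ∂(_root_.stdGaussian n), T x ≠ 0 :=
  measure_mono_null (fun _ hx ↦ not_not.mp hx) <| stdGaussian_absolutelyContinuous_volume n <|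
    Measure.addHaar_submodule volume _ fun h ↦ hT (LinearMap.ker_eq_top.mp h)

theorem LinearMap.norm_toContinuousLinearMap_le_of_finrank_range_eq_one {𝕜 E F : Type*}
    [RCLike 𝕜] [NormedAddCommGroup E] [InnerProductSpace 𝕜 E] [FiniteDimensional 𝕜 E]
    [NormedAddCommGroup F] [InnerProductSpace 𝕜 F] [FiniteDimensional 𝕜 F]
    {T : E →ₗ[𝕜] F} (hT : Module.finrank 𝕜 (LinearMap.range T) = 1) {x : E} (hx : T x ≠ 0) :
    ‖LinearMap.toContinuousLinearMap T‖ ≤ ‖LinearMap.adjoint T (T x)‖ / ‖T x‖ := by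
  set u := T x
  have hu : 0 < ‖u‖ := norm_pos_iff.mpr hx
  have hspan := (finrank_eq_one_iff_of_nonzero' (⟨u, LinearMap.mem_range_self T x⟩ : range T)
    (by simpa using hx)).mp hT
  refine ContinuousLinearMap.opNorm_le_bound _ (by positivity) fun y ↦ ?_
  obtain ⟨c, hc⟩ := hspan ⟨T y, LinearMap.mem_range_self T y⟩
  replace hc : T y = c • u := by simpa using congrArg Subtype.val hc.symm
  have key : ‖T y‖ * ‖u‖ ≤ ‖LinearMap.adjoint T u‖ * ‖y‖ := calc
    ‖T y‖ * ‖u‖ = ‖(inner 𝕜 (LinearMap.adjoint T u) y : 𝕜)‖ := by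
      rw [LinearMap.adjoint_inner_left, hc, inner_smul_right, inner_self_eq_norm_sq_to_K,
        norm_smul, norm_mul, norm_pow, RCLike.norm_ofReal, abs_norm]
      ring
    _ ≤ ‖LinearMap.adjoint T u‖ * ‖y‖ := norm_inner_le_norm _ _
  rw [LinearMap.coe_toContinuousLinearMap', div_mul_eq_mul_div, le_div_iff₀ hu]
  exact key

theorem Matrix.finrank_range_toEuclideanLin {m n : ℕ} (A : Matrix (Fin m) (Fin n) ℝ) :
    Module.finrank ℝ (LinearMap.range (toEuclideanLin A)) = A.rank := by
  rw [rank_eq_finrank_range_toLin A (EuclideanSpace.basisFun (Fin m) ℝ).toBasis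
    (EuclideanSpace.basisFun (Fin n) ℝ).toBasis, toEuclideanLin_eq_toLin_orthonormal]

theorem Matrix.toEuclideanLin_transpose_eq_adjoint {m n : ℕ} (A : Matrix (Fin m) (Fin n) ℝ) :
    toEuclideanLin Aᵀ = LinearMap.adjoint (toEuclideanLin A) := by
  rw [← conjTranspose_eq_transpose_of_trivial, toEuclideanLin_conjTranspose_eq_adjoint]

theorem matSpectralNorm_le_counterbalance {m n : ℕ} {A : Matrix (Fin m) (Fin n) ℝ}
    (hA : A.rank = 1) {θ : ℝ} (hθ : 1 ≤ θ) {x₁ : EuclideanSpace ℝ (Fin n)}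
    (hx₁ : toEuclideanLin A x₁ ≠ 0) (x₂ : EuclideanSpace ℝ (Fin n)) :
    matSpectralNorm A ≤ counterbalance A θ x₁ x₂ := by
  have hr := LinearMap.norm_toContinuousLinearMap_le_of_finrank_range_eq_one
    (by rw [finrank_range_toEuclideanLin, hA]) hx₁
  rw [← toEuclideanLin_transpose_eq_adjoint] at hr
  calc matSpectralNorm A ≤ ‖toEuclideanLin Aᵀ (toEuclideanLin A x₁)‖ / ‖toEuclideanLin A x₁‖ := hr
    _ ≤ √((‖toEuclideanLin Aᵀ (toEuclideanLin A x₁)‖ / ‖toEuclideanLin A x₁‖) ^ 2 +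
          ‖toEuclideanLin A x₂‖ ^ 2) :=
      Real.le_sqrt_of_sq_le (le_add_of_nonneg_right (by positivity))
    _ ≤ counterbalance A θ x₁ x₂ := le_mul_of_one_le_left (by positivity) hθ

theorem counterbalance_no_underestimation_of_rank_one_general
    {m n : ℕ} (A : Matrix (Fin m) (Fin n) ℝ) (hrk : A.rank = 1)
    {Ω : Type*} [MeasureSpace Ω] [IsProbabilityMeasure (ℙ : Measure Ω)]
    (X₁ X₂ : Ω → EuclideanSpace ℝ (Fin n))
    (hX₁ : Measure.map X₁ ℙ = stdGaussian n)
    (θ : ℝ) (hθ : 1 ≤ θ) :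
    ℙ {ω | matSpectralNorm A ≤ counterbalance A θ (X₁ ω) (X₂ ω)} = 1 := by
  have hA : toEuclideanLin A ≠ 0 := fun h ↦ by
    have := (finrank_range_toEuclideanLin A).trans hrk
    rw [h, LinearMap.range_zero, finrank_bot] at this
    exact zero_ne_one this
  have hX₁m : AEMeasurable X₁ ℙ :=
    aemeasurable_of_map_neZero (by rw [hX₁]; infer_instance)
  have hAX₁ : ∀ᵐ ω ∂ℙ, toEuclideanLin A (X₁ ω) ≠ 0 :=
    ae_of_ae_map hX₁m (hX₁ ▸ ae_stdGaussian_apply_ne_zero hA)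
  have hle : ∀ᵐ ω ∂ℙ, matSpectralNorm A ≤ counterbalance A θ (X₁ ω) (X₂ ω) :=
    hAX₁.mono fun ω hω ↦ matSpectralNorm_le_counterbalance hrk hθ hω (X₂ ω)
  exact (measure_congr (ae_eq_univ.mpr hle)).trans measure_univ

/-- for a rank-one matrix `A`, independent standard Gaussian `X₁, X₂`
and `θ ≥ 1`, the Counterbalance estimator a.s. does not underestimate:
`P(T^cb(θ,X) ≥ ‖A‖) = 1`. -/
theorem counterbalance_no_underestimation_of_rank_one
    {m n : ℕ} (A : Matrix (Fin m) (Fin n) ℝ) (hrk : A.rank = 1)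
    {Ω : Type*} [MeasureSpace Ω] [IsProbabilityMeasure (ℙ : Measure Ω)]
    (X₁ X₂ : Ω → EuclideanSpace ℝ (Fin n))
    (hX₁ : Measure.map X₁ ℙ = stdGaussian n)
    (hX₂ : Measure.map X₂ ℙ = stdGaussian n)
    (hindep : IndepFun X₁ X₂ ℙ)
    (θ : ℝ) (hθ : 1 ≤ θ) :
    ℙ {ω | matSpectralNorm A ≤ counterbalance A θ (X₁ ω) (X₂ ω)} = 1 :=
  counterbalance_no_underestimation_of_rank_one_general A hrk X₁ X₂ hX₁ θ hθ
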